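/- arXiv:2110.03964 — 5 statements merged into one kernel-verified Lean document; each statement's English description precedes it below -/
import Mathlib

section
/- In the dyadic sequent calculus for SELL^Π, if ¬(a ⪯ b), then for any atomic proposition p the sequent A_Σ : !^b p : · ⊢ !^a p is not derivable; in particular, when a and b are ⪯-unrelated, !^a p and !^b p are not logically equivalent. -/
attribute [local instance] Classical.propDecidable

/-- Subexponential indices: constants from `I` or subexponential variables. -/
inductive SIdx (I : Type) where
  | const : I → SIdx I
  | var : ℕ → SIdx I

/-- Formulas of intuitionistic subexponential linear logic SELL^Π. -/
inductive SForm (I : Type) where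
  | atom : ℕ → SForm I
  | one : SForm I
  | zero : SForm I
  | top : SForm I
  | tensor : SForm I → SForm I → SForm I
  | oplus : SForm I → SForm I → SForm I
  | limp : SForm I → SForm I → SForm I
  | with_ : SForm I → SForm I → SForm I
  | bang : SIdx I → SForm I → SForm I
  /-- ⋒ α:s. F (universal subexponential quantifier, named binder) -/
  | cap : ℕ → SIdx I → SForm I → SForm I
  /-- ⋓ α:s. F (existential subexponential quantifier, named binder) -/
  | cup : ℕ → SIdx I → SForm I → SForm I

/-- A subexponential signature ⟨I, ⪯, U⟩ with U upwardly closed. -/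
structure SSig (I : Type) where
  le : I → I → Prop
  le_refl : ∀ a, le a a
  le_trans : ∀ {a b c}, le a b → le b c → le a c
  U : Set I
  U_up : ∀ {u u'}, u ∈ U → le u u' → u' ∈ U

namespace SIdx

def subst {I : Type} : SIdx I → ℕ → SIdx I → SIdx I
  | const a, _, _ => const a
  | var n, x, l => if n = x then l else var n

def fv {I : Type} : SIdx I → Set ℕ
  | const _ => ∅
  | var n => {n}

end SIdx

namespace SForm

/-- Substitution of an index `l` for the free index variable `x`. -/
def subst {I : Type} : SForm I → ℕ → SIdx I → SForm I
  | atom n, _, _ => atom n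
  | one, _, _ => one
  | zero, _, _ => zero
  | top, _, _ => top
  | tensor F G, x, l => tensor (F.subst x l) (G.subst x l)
  | oplus F G, x, l => oplus (F.subst x l) (G.subst x l)
  | limp F G, x, l => limp (F.subst x l) (G.subst x l)
  | with_ F G, x, l => with_ (F.subst x l) (G.subst x l)
  | bang s F, x, l => bang (s.subst x l) (F.subst x l)
  | cap y s F, x, l => cap y (s.subst x l) (if y = x then F else F.subst x l)
  | cup y s F, x, l => cup y (s.subst x l) (if y = x then F else F.subst x l)

/-- Free index variables of a formula. -/
def fv {I : Type} : SForm I → Set ℕ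
  | atom _ => ∅
  | one => ∅
  | zero => ∅
  | top => ∅
  | tensor F G => F.fv ∪ G.fv
  | oplus F G => F.fv ∪ G.fv
  | limp F G => F.fv ∪ G.fv
  | with_ F G => F.fv ∪ G.fv
  | bang s F => s.fv ∪ F.fv
  | cap y s F => s.fv ∪ (F.fv \ {y})
  | cup y s F => s.fv ∪ (F.fv \ {y})

end SForm

variable {I : Type}

/-- `s` is an unbounded subexponential index (a constant in `U`). -/
def SSig.UnbI (σ : SSig I) (s : SIdx I) : Prop := ∃ u ∈ σ.U, s = SIdx.const u

/-- The set of typed subexponential constants A_Σ = {b : a ∣ b ⪯ a}. -/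
def SSig.ASig (σ : SSig I) : Set (SIdx I × SIdx I) :=
  {pr | ∃ a b : I, σ.le b a ∧ pr = (SIdx.const b, SIdx.const a)}

/-- The preorder on indices determined by ⪯ and the typing context `A`
(`(s, t) ∈ A` is read as `s : t`, i.e. `s ⪯ t`). -/
def SLeA (σ : SSig I) (A : Set (SIdx I × SIdx I)) : SIdx I → SIdx I → Prop :=
  Relation.ReflTransGen
    (fun s t => (s, t) ∈ A ∨ ∃ a b : I, σ.le a b ∧ s = SIdx.const a ∧ t = SIdx.const b)

/-- `F` is of the form `!^u G` with `u ∈ U` (an unbounded banged formula). -/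
def unbBang (σ : SSig I) (F : SForm I) : Prop :=
  ∃ u G, u ∈ σ.U ∧ F = SForm.bang (SIdx.const u) G

/-- `F` is of the form `!^s G` with `s` linear. -/
def linBang (σ : SSig I) (F : SForm I) : Prop :=
  ∃ s G, ¬ σ.UnbI s ∧ F = SForm.bang s G

/-- `Γ^{⪰ a}` is defined: each member of `Γ` is a banged formula whose index is
either unbounded or above `a`. -/
def restrictDef (σ : SSig I) (A : Set (SIdx I × SIdx I)) (a : SIdx I)
    (Γ : Multiset (SForm I)) : Prop :=
  ∀ F ∈ Γ, ∃ s G, F = SForm.bang s G ∧ (σ.UnbI s ∨ SLeA σ A a s)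

/-- The restricted context `Γ^{⪰ a} = {!^b F ∈ Γ ∣ a ⪯ b}`. -/
noncomputable def restrict (σ : SSig I) (A : Set (SIdx I × SIdx I)) (a : SIdx I)
    (Γ : Multiset (SForm I)) : Multiset (SForm I) :=
  Γ.filter (fun F => ∃ s G, F = SForm.bang s G ∧ SLeA σ A a s)

/-- `n` is a fresh subexponential variable for the typing context `A`. -/
def freshA (A : Set (SIdx I × SIdx I)) (n : ℕ) : Prop :=
  ∀ pr ∈ A, n ∉ SIdx.fv pr.1 ∧ n ∉ SIdx.fv pr.2

/-- The dyadic sequent calculus for SELL^Π: `SSeq σ A Γ Ψ G` is the sequent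
`A : Γ : Ψ ⊢ G`, where `Γ` is the subexponential context and `Ψ` the linear one. -/
inductive SSeq (σ : SSig I) :
    Set (SIdx I × SIdx I) → Multiset (SForm I) → Multiset (SForm I) → SForm I → Prop where
  | id {A Υ n} : (∀ F ∈ Υ, unbBang σ F) →
      SSeq σ A Υ {SForm.atom n} (SForm.atom n)
  | tensorL {A Γ Ψ F G H} : SSeq σ A Γ (F ::ₘ G ::ₘ Ψ) H →
      SSeq σ A Γ (SForm.tensor F G ::ₘ Ψ) H
  | tensorR {A Υ Δ Δ' Ψ Ψ' F G} :
      (∀ H ∈ Υ, unbBang σ H) → (∀ H ∈ Δ, linBang σ H) → (∀ H ∈ Δ', linBang σ H) →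
      SSeq σ A (Υ + Δ) Ψ F → SSeq σ A (Υ + Δ') Ψ' G →
      SSeq σ A (Υ + Δ + Δ') (Ψ + Ψ') (SForm.tensor F G)
  | limpL {A Υ Δ Δ' Ψ Ψ' F G H} :
      (∀ K ∈ Υ, unbBang σ K) → (∀ K ∈ Δ, linBang σ K) → (∀ K ∈ Δ', linBang σ K) →
      SSeq σ A (Υ + Δ) Ψ F → SSeq σ A (Υ + Δ') (G ::ₘ Ψ') H →
      SSeq σ A (Υ + Δ + Δ') (SForm.limp F G ::ₘ (Ψ + Ψ')) H
  | limpR {A Γ Ψ F G} : SSeq σ A Γ (F ::ₘ Ψ) G → SSeq σ A Γ Ψ (SForm.limp F G)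
  | withL1 {A Γ Ψ F G H} : SSeq σ A Γ (F ::ₘ Ψ) H →
      SSeq σ A Γ (SForm.with_ F G ::ₘ Ψ) H
  | withL2 {A Γ Ψ F G H} : SSeq σ A Γ (G ::ₘ Ψ) H →
      SSeq σ A Γ (SForm.with_ F G ::ₘ Ψ) H
  | withR {A Γ Ψ F G} : SSeq σ A Γ Ψ F → SSeq σ A Γ Ψ G →
      SSeq σ A Γ Ψ (SForm.with_ F G)
  | oplusL {A Γ Ψ F G H} : SSeq σ A Γ (F ::ₘ Ψ) H → SSeq σ A Γ (G ::ₘ Ψ) H →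
      SSeq σ A Γ (SForm.oplus F G ::ₘ Ψ) H
  | oplusR1 {A Γ Ψ F G} : SSeq σ A Γ Ψ F → SSeq σ A Γ Ψ (SForm.oplus F G)
  | oplusR2 {A Γ Ψ F G} : SSeq σ A Γ Ψ G → SSeq σ A Γ Ψ (SForm.oplus F G)
  | oneL {A Γ Ψ G} : SSeq σ A Γ Ψ G → SSeq σ A Γ (SForm.one ::ₘ Ψ) G
  | oneR {A Υ} : (∀ F ∈ Υ, unbBang σ F) → SSeq σ A Υ 0 SForm.one
  | zeroL {A Γ Ψ G} : SSeq σ A Γ (SForm.zero ::ₘ Ψ) G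
  | topR {A Γ Ψ} : SSeq σ A Γ Ψ SForm.top
  | bangL {A Γ Ψ s F G} : ¬ σ.UnbI s → SSeq σ A Γ (F ::ₘ Ψ) G →
      SSeq σ A (SForm.bang s F ::ₘ Γ) Ψ G
  | copy {A Γ Ψ s F G} : σ.UnbI s → SSeq σ A (SForm.bang s F ::ₘ Γ) (F ::ₘ Ψ) G →
      SSeq σ A (SForm.bang s F ::ₘ Γ) Ψ G
  | store {A Γ Ψ s F G} : SSeq σ A (SForm.bang s F ::ₘ Γ) Ψ G →
      SSeq σ A Γ (SForm.bang s F ::ₘ Ψ) G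
  | bangR {A Γ s G} : restrictDef σ A s Γ → SSeq σ A (restrict σ A s Γ) 0 G →
      SSeq σ A Γ 0 (SForm.bang s G)
  | capL {A Γ Ψ x s F G l} : (∃ t, (l, t) ∈ A ∧ SLeA σ A t s) →
      SSeq σ A Γ (F.subst x l ::ₘ Ψ) G →
      SSeq σ A Γ (SForm.cap x s F ::ₘ Ψ) G
  | capR {A Γ Ψ x s F} {n : ℕ} : freshA A n →
      (∀ H ∈ Γ, n ∉ SForm.fv H) → (∀ H ∈ Ψ, n ∉ SForm.fv H) → n ∉ SForm.fv F →
      SSeq σ (insert (SIdx.var n, s) A) Γ Ψ (F.subst x (SIdx.var n)) →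
      SSeq σ A Γ Ψ (SForm.cap x s F)
  | cupL {A Γ Ψ x s F G} {n : ℕ} : freshA A n →
      (∀ H ∈ Γ, n ∉ SForm.fv H) → (∀ H ∈ Ψ, n ∉ SForm.fv H) →
      n ∉ SForm.fv F → n ∉ SForm.fv G →
      SSeq σ (insert (SIdx.var n, s) A) Γ (F.subst x (SIdx.var n) ::ₘ Ψ) G →
      SSeq σ A Γ (SForm.cup x s F ::ₘ Ψ) G
  | cupR {A Γ Ψ x s F l} : (∃ t, (l, t) ∈ A ∧ SLeA σ A t s) →
      SSeq σ A Γ Ψ (F.subst x l) →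
      SSeq σ A Γ Ψ (SForm.cup x s F)

/-!
Call a formula inert below `s` if it is an atom `r` or a banged atom `!^t r` with `s ⋠ t`.
From inert contexts `!^s q` is unprovable: the left rules other than copy, `!_L` and store need a
compound formula in the linear context, those three keep both contexts inert, and promotion to
`!^s` must discard every inert formula, leaving `· : · ⊢ q`, which has no proof. Over `A_Σ` the
preorder on constants is just `⪯`, so `!^b p` is inert below `a` when `a ⋠ b`. For the
equivalence, in empty contexts `&` and `⊸` can only be introduced on the right, which reduces
`!^a p ⊸ !^b p` to `· : !^a p ⊢ !^b p`.
-/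

theorem SSig.le_of_sLeA_aSig {σ : SSig I} {x y : I}
    (h : SLeA σ σ.ASig (SIdx.const x) (SIdx.const y)) : σ.le x y := by
  suffices ∀ {t}, SLeA σ σ.ASig (SIdx.const x) t → ∃ z, t = SIdx.const z ∧ σ.le x z by
    obtain ⟨z, hz, hxz⟩ := this h
    cases hz
    exact hxz
  intro t ht
  induction ht with
  | refl => exact ⟨x, rfl, σ.le_refl x⟩
  | tail _ hstep ih =>
    obtain ⟨z, rfl, hxz⟩ := ih
    rcases hstep with ⟨c, d, hdc, hpair⟩ | ⟨c, d, hcd, hc, rfl⟩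
    · obtain ⟨⟨⟩, rfl⟩ := Prod.mk.inj hpair
      exact ⟨c, rfl, σ.le_trans hxz hdc⟩
    · cases hc
      exact ⟨d, rfl, σ.le_trans hxz hcd⟩

inductive InertBelow (σ : SSig I) (A : Set (SIdx I × SIdx I)) (s : SIdx I) : SForm I → Prop
  | atom (r : ℕ) : InertBelow σ A s (SForm.atom r)
  | bang {t : SIdx I} (r : ℕ) : ¬ SLeA σ A s t → InertBelow σ A s (SForm.bang t (SForm.atom r))

theorem restrict_eq_zero_of_inertBelow {σ : SSig I} {A : Set (SIdx I × SIdx I)} {s : SIdx I}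
    {Γ : Multiset (SForm I)} (hΓ : ∀ F ∈ Γ, InertBelow σ A s F) : restrict σ A s Γ = 0 := by
  refine Multiset.filter_eq_nil.2 fun F hF ⟨t, G, hFt, hst⟩ => ?_
  cases hΓ F hF with
  | atom => cases hFt
  | bang _ hnot => cases hFt; exact hnot hst

theorem inertBelow_bang_of_not_le {σ : SSig I} {a b : I} (hab : ¬ σ.le a b) (p : ℕ) :
    InertBelow σ σ.ASig (SIdx.const a) (SForm.bang (SIdx.const b) (SForm.atom p)) :=
  .bang p (mt SSig.le_of_sLeA_aSig hab)

namespace SSeq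

variable {σ : SSig I} {A : Set (SIdx I × SIdx I)}

theorem not_empty_atom (q : ℕ) : ¬ SSeq σ A 0 0 (SForm.atom q) := by
  suffices ∀ {Γ Ψ G}, SSeq σ A Γ Ψ G → Γ = 0 → Ψ = 0 → G ≠ SForm.atom q from
    fun h => this h rfl rfl rfl
  intro Γ Ψ G h
  cases h <;> simp

theorem left_of_with_of_empty {F G : SForm I} (h : SSeq σ A 0 0 (SForm.with_ F G)) :
    SSeq σ A 0 0 F := by
  suffices ∀ {Γ Ψ H}, SSeq σ A Γ Ψ H → Γ = 0 → Ψ = 0 → H = SForm.with_ F G →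
      SSeq σ A 0 0 F from this h rfl rfl rfl
  intro Γ Ψ H hd
  cases hd with
  | withR hF _ => rintro rfl rfl ⟨⟩; exact hF
  | _ => simp

theorem of_limp_of_empty {F G : SForm I} (h : SSeq σ A 0 0 (SForm.limp F G)) :
    SSeq σ A 0 {F} G := by
  suffices ∀ {Γ Ψ H}, SSeq σ A Γ Ψ H → Γ = 0 → Ψ = 0 → H = SForm.limp F G →
      SSeq σ A 0 {F} G from this h rfl rfl rfl
  intro Γ Ψ H hd
  cases hd with
  | limpR hG => rintro rfl rfl ⟨⟩; exact hG
  | _ => simp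

theorem ne_bang_atom_of_inertBelow {Γ Ψ : Multiset (SForm I)} {G : SForm I} {s : SIdx I}
    (h : SSeq σ A Γ Ψ G) (hΓ : ∀ F ∈ Γ, InertBelow σ A s F) (hΨ : ∀ F ∈ Ψ, InertBelow σ A s F)
    (q : ℕ) : G ≠ SForm.bang s (SForm.atom q) := by
  induction h with
  | copy _ _ ih =>
    cases hΓ _ (Multiset.mem_cons_self _ _)
    exact ih hΓ (Multiset.forall_mem_cons.2 ⟨.atom _, hΨ⟩)
  | bangL _ _ ih =>
    cases hΓ _ (Multiset.mem_cons_self _ _)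
    exact ih (fun F hF => hΓ F (Multiset.mem_cons_of_mem hF))
      (Multiset.forall_mem_cons.2 ⟨.atom _, hΨ⟩)
  | store _ ih =>
    obtain ⟨hF, hΨ⟩ := Multiset.forall_mem_cons.1 hΨ
    exact ih (Multiset.forall_mem_cons.2 ⟨hF, hΓ⟩) hΨ
  | bangR _ hprem =>
    rintro ⟨⟩
    rw [restrict_eq_zero_of_inertBelow hΓ] at hprem
    exact not_empty_atom q hprem
  | _ => rintro ⟨⟩ <;> exact nomatch hΨ _ (Multiset.mem_cons_self _ _)

end SSeq

/-- If `¬ a ⪯ b` then `A_Σ : !^b p : · ⊢ !^a p` is not derivable; in particular,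
for ⪯-unrelated `a` and `b`, `!^a p` and `!^b p` are not logically equivalent
(the formula `(!^a p ⊸ !^b p) & (!^b p ⊸ !^a p)` is not provable). -/
theorem sell_bang_not_accessible {I : Type} (σ : SSig I) :
    (∀ a b : I, ¬ σ.le a b → ∀ p : ℕ,
      ¬ SSeq σ σ.ASig {SForm.bang (SIdx.const b) (SForm.atom p)} 0
          (SForm.bang (SIdx.const a) (SForm.atom p))) ∧
    (∀ a b : I, ¬ σ.le a b → ¬ σ.le b a → ∀ p : ℕ,
      ¬ SSeq σ σ.ASig 0 0
          (SForm.with_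
            (SForm.limp (SForm.bang (SIdx.const a) (SForm.atom p))
                        (SForm.bang (SIdx.const b) (SForm.atom p)))
            (SForm.limp (SForm.bang (SIdx.const b) (SForm.atom p))
                        (SForm.bang (SIdx.const a) (SForm.atom p))))) := by
  refine ⟨fun a b hab p h => ?_, fun a b _ hba p h => ?_⟩
  · exact h.ne_bang_atom_of_inertBelow (by simpa using inertBelow_bang_of_not_le hab p)
      (by simp) p rfl
  · exact h.left_of_with_of_empty.of_limp_of_empty.ne_bang_atom_of_inertBelow (by simp)
      (by simpa using inertBelow_bang_of_not_le hba p) p rfl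
end

section
/- Contraction of unbounded subexponential formulas is admissible in the dyadic sequent calculus for SELL^Π: if A : Γ, !^u F, !^u F : Ψ ⊢ G is derivable and u ∈ U, then A : Γ, !^u F : Ψ ⊢ G is derivable. -/
attribute [local instance] Classical.propDecidable

variable {I : Type}

/-! Induct on the derivation, erasing one of at least two copies of an unbounded banged formula
from the subexponential context. The rules that split the context (`⊗_R`, `⊸_L`) duplicate its
unbounded part, so both copies reach every premise; `!_L` cannot consume them, and `!_R` keeps
both or neither. -/

theorem Multiset.filter_erase_of_pos {α : Type*} [DecidableEq α] {p : α → Prop}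
    [DecidablePred p] (s : Multiset α) {a : α} (ha : p a) :
    (s.erase a).filter p = (s.filter p).erase a := by
  rw [← sub_singleton, filter_sub, filter_singleton, if_pos ha, sub_singleton]

theorem Multiset.filter_erase_of_neg {α : Type*} [DecidableEq α] {p : α → Prop}
    [DecidablePred p] (s : Multiset α) {a : α} (ha : ¬p a) :
    (s.erase a).filter p = s.filter p := by
  rw [← sub_singleton, filter_sub, filter_singleton, if_neg ha, empty_eq_zero, Multiset.sub_zero]

theorem Multiset.forall_mem_erase {α : Type*} [DecidableEq α] {P : α → Prop} {s : Multiset α}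
    (a : α) (hs : ∀ x ∈ s, P x) : ∀ x ∈ s.erase a, P x :=
  fun x hx => hs x (mem_of_mem_erase hx)

section

variable {σ : SSig I} {D : SForm I}

theorem not_linBang_of_unbBang (hD : unbBang σ D) : ¬linBang σ D := by
  obtain ⟨u, F, hu, rfl⟩ := hD
  rintro ⟨s, G, hs, heq⟩
  cases heq
  exact hs ⟨u, hu, rfl⟩

theorem count_eq_zero_of_forall_linBang (hD : unbBang σ D) {Δ : Multiset (SForm I)}
    (hΔ : ∀ H ∈ Δ, linBang σ H) : Δ.count D = 0 :=
  Multiset.count_eq_zero.2 fun hmem => not_linBang_of_unbBang hD (hΔ D hmem)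

theorem count_add_add_of_forall_linBang (hD : unbBang σ D) {Υ Δ Δ' : Multiset (SForm I)}
    (hΔ : ∀ H ∈ Δ, linBang σ H) (hΔ' : ∀ H ∈ Δ', linBang σ H) :
    (Υ + Δ + Δ').count D = Υ.count D := by
  rw [Multiset.count_add, Multiset.count_add, count_eq_zero_of_forall_linBang hD hΔ,
    count_eq_zero_of_forall_linBang hD hΔ', add_zero, add_zero]

theorem SSeq.contraction (hD : unbBang σ D) {A : Set (SIdx I × SIdx I)}
    {Γ Ψ : Multiset (SForm I)} {G : SForm I} (h : SSeq σ A Γ Ψ G) (hc : 2 ≤ Γ.count D) :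
    SSeq σ A (Γ.erase D) Ψ G := by
  induction h with
  | id hΥ => exact SSeq.id (Multiset.forall_mem_erase D hΥ)
  | oneR hΥ => exact oneR (Multiset.forall_mem_erase D hΥ)
  | tensorL _ ih => exact tensorL (ih hc)
  | limpR _ ih => exact limpR (ih hc)
  | withL1 _ ih => exact withL1 (ih hc)
  | withL2 _ ih => exact withL2 (ih hc)
  | withR _ _ ih₁ ih₂ => exact withR (ih₁ hc) (ih₂ hc)
  | oplusL _ _ ih₁ ih₂ => exact oplusL (ih₁ hc) (ih₂ hc)
  | oplusR1 _ ih => exact oplusR1 (ih hc)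
  | oplusR2 _ ih => exact oplusR2 (ih hc)
  | oneL _ ih => exact oneL (ih hc)
  | zeroL => exact zeroL
  | topR => exact topR
  | capL hl _ ih => exact capL hl (ih hc)
  | cupR hl _ ih => exact cupR hl (ih hc)
  | capR hfresh hΓ hΨ hF _ ih => exact capR hfresh (Multiset.forall_mem_erase D hΓ) hΨ hF (ih hc)
  | cupL hfresh hΓ hΨ hF hG _ ih =>
    exact cupL hfresh (Multiset.forall_mem_erase D hΓ) hΨ hF hG (ih hc)
  | @tensorR A Υ Δ Δ' Ψ Ψ' F G hΥ hΔ hΔ' _ _ ih₁ ih₂ =>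
    rw [count_add_add_of_forall_linBang hD hΔ hΔ'] at hc
    have hmem : D ∈ Υ := Multiset.count_pos.1 (by omega)
    have h₁ := ih₁ (by rw [Multiset.count_add]; omega)
    have h₂ := ih₂ (by rw [Multiset.count_add]; omega)
    rw [Multiset.erase_add_left_pos _ hmem] at h₁ h₂
    rw [Multiset.erase_add_left_pos _ (Multiset.mem_add.2 (Or.inl hmem)),
      Multiset.erase_add_left_pos _ hmem]
    exact tensorR (Multiset.forall_mem_erase D hΥ) hΔ hΔ' h₁ h₂
  | @limpL A Υ Δ Δ' Ψ Ψ' F G H hΥ hΔ hΔ' _ _ ih₁ ih₂ =>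
    rw [count_add_add_of_forall_linBang hD hΔ hΔ'] at hc
    have hmem : D ∈ Υ := Multiset.count_pos.1 (by omega)
    have h₁ := ih₁ (by rw [Multiset.count_add]; omega)
    have h₂ := ih₂ (by rw [Multiset.count_add]; omega)
    rw [Multiset.erase_add_left_pos _ hmem] at h₁ h₂
    rw [Multiset.erase_add_left_pos _ (Multiset.mem_add.2 (Or.inl hmem)),
      Multiset.erase_add_left_pos _ hmem]
    exact limpL (Multiset.forall_mem_erase D hΥ) hΔ hΔ' h₁ h₂
  | @bangL A Γ Ψ s F G hs _ ih =>
    have hne : SForm.bang s F ≠ D := by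
      rintro rfl
      exact not_linBang_of_unbBang hD ⟨s, F, hs, rfl⟩
    rw [Multiset.count_cons_of_ne hne.symm] at hc
    rw [Multiset.erase_cons_tail _ hne]
    exact bangL hs (ih hc)
  | @copy A Γ Ψ s F G hs _ ih =>
    by_cases hX : SForm.bang s F = D
    · subst hX
      have hmem : SForm.bang s F ∈ Γ := by
        rw [Multiset.count_cons_self] at hc
        exact Multiset.count_pos.1 (by omega)
      have h := ih (by rwa [Multiset.count_cons_self] at hc ⊢)
      rw [Multiset.erase_cons_head, ← Multiset.cons_erase hmem] at h ⊢
      exact copy hs h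
    · have h := ih hc
      rw [Multiset.erase_cons_tail _ hX] at h ⊢
      exact copy hs h
  | @store A Γ Ψ s F G _ ih =>
    have h := ih (hc.trans (Multiset.count_le_of_le _ (Multiset.le_cons_self _ _)))
    rw [Multiset.erase_cons_tail_of_mem (Multiset.count_pos.1 (by omega))] at h
    exact store h
  | @bangR A Γ s G hdef h ih =>
    refine bangR (Multiset.forall_mem_erase D hdef) ?_
    by_cases hp : ∃ s' G', D = SForm.bang s' G' ∧ SLeA σ A s s'
    · rw [restrict, Multiset.filter_erase_of_pos (a := D) _ hp]
      exact ih (by rwa [restrict, Multiset.count_filter_of_pos (a := D) hp])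
    · rwa [restrict, Multiset.filter_erase_of_neg (a := D) _ hp]

end

/-- **Admissibility of contraction** for unbounded subexponential formulas:
if `A : Γ, !^u F, !^u F : Ψ ⊢ G` is derivable and `u ∈ U`, then
`A : Γ, !^u F : Ψ ⊢ G` is derivable. -/
theorem sell_contraction {I : Type} (σ : SSig I) (A : Set (SIdx I × SIdx I))
    (Γ Ψ : Multiset (SForm I)) (G F : SForm I) (u : I) (hu : u ∈ σ.U)
    (h : SSeq σ A
      (SForm.bang (SIdx.const u) F ::ₘ SForm.bang (SIdx.const u) F ::ₘ Γ) Ψ G) :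
    SSeq σ A (SForm.bang (SIdx.const u) F ::ₘ Γ) Ψ G := by
  have h' := h.contraction ⟨u, F, hu, rfl⟩ (by simp)
  rwa [Multiset.erase_cons_head] at h'
end

section
/- The left ⊗ macro rule of the domain-aware type system is admissible in the dyadic sequent calculus for SELL^Π: if A : Γ, !^a F, !^a G : · ⊢ H is derivable, then A : Γ, !^a(!^a F ⊗ !^a G) : · ⊢ H is derivable. -/
attribute [local instance] Classical.propDecidable

variable {I : Type}

/-! For a linear index `a` the macro is just `!_L`, `⊗_L` and two `store`s. For an unbounded
`a = u`, `copy` leaves `!^u(!^u F ⊗ !^u G)` behind in the context, so the premise must be weakened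
by it. Weakening by an unbounded formula is admissible provided it cannot break the eigenvariable
conditions of `⋒_R` and `⋓_L`; this formula has the same free variables as `!^u F` and `!^u G`,
which are already in the context. -/

section Weakening

variable {σ : SSig I} {u : I}

lemma not_linBang_bang_of_mem_U (hu : u ∈ σ.U) (X : SForm I) :
    ¬ linBang σ (SForm.bang (SIdx.const u) X) := by
  rintro ⟨s, Y, hs, heq⟩
  cases heq
  exact hs ⟨u, hu, rfl⟩

lemma mem_of_mem_add_linBang (hu : u ∈ σ.U) {X : SForm I} {Υ Δ Δ' : Multiset (SForm I)}
    (hΔ : ∀ K ∈ Δ, linBang σ K) (hΔ' : ∀ K ∈ Δ', linBang σ K)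
    (h : SForm.bang (SIdx.const u) X ∈ Υ + Δ + Δ') :
    SForm.bang (SIdx.const u) X ∈ Υ := by
  rcases Multiset.mem_add.1 h with h | h
  · rcases Multiset.mem_add.1 h with h | h
    · exact h
    · exact absurd (hΔ _ h) (not_linBang_bang_of_mem_U hu X)
  · exact absurd (hΔ' _ h) (not_linBang_bang_of_mem_U hu X)

/-- Stable along derivations: `!^u`-formulas survive `!_L`, the context splits of `⊗_R` and `⊸_L`,
and every restriction `Γ^{⪰s}` that keeps `!^u X` itself. -/
def FvCovered (u : I) (X : SForm I) (Γ : Multiset (SForm I)) : Prop :=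
  ∀ n ∈ X.fv, ∃ Y, SForm.bang (SIdx.const u) Y ∈ Γ ∧ n ∈ Y.fv

lemma FvCovered.mono {X : SForm I} {Γ Γ' : Multiset (SForm I)} (h : FvCovered u X Γ)
    (hΓ : ∀ Y, SForm.bang (SIdx.const u) Y ∈ Γ → SForm.bang (SIdx.const u) Y ∈ Γ') :
    FvCovered u X Γ' := fun n hn =>
  let ⟨Y, hY, hnY⟩ := h n hn
  ⟨Y, hΓ Y hY, hnY⟩

lemma FvCovered.not_mem_fv_bang {X : SForm I} {Γ : Multiset (SForm I)} {n : ℕ}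
    (h : FvCovered u X Γ) (hΓ : ∀ K ∈ Γ, n ∉ K.fv) :
    n ∉ (SForm.bang (SIdx.const u) X).fv := by
  simp only [SForm.fv, SIdx.fv, Set.empty_union]
  intro hn
  obtain ⟨Y, hY, hnY⟩ := h n hn
  exact hΓ _ hY (by simpa only [SForm.fv, SIdx.fv, Set.empty_union] using hnY)

theorem SSeq.weaken_bang_of_mem_U (hu : u ∈ σ.U) {X : SForm I} {A : Set (SIdx I × SIdx I)}
    {Γ Ψ : Multiset (SForm I)} {H : SForm I} (h : SSeq σ A Γ Ψ H) (hX : FvCovered u X Γ) :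
    SSeq σ A (SForm.bang (SIdx.const u) X ::ₘ Γ) Ψ H := by
  have hK : unbBang σ (SForm.bang (SIdx.const u) X) := ⟨u, X, hu, rfl⟩
  induction h with
  | id hΥ => exact .id (Multiset.forall_mem_cons.2 ⟨hK, hΥ⟩)
  | tensorL _ ih => exact .tensorL (ih hX)
  | tensorR hΥ hΔ hΔ' _ _ ih₁ ih₂ =>
    have hXΥ := hX.mono fun Y hY => mem_of_mem_add_linBang hu hΔ hΔ' hY
    rw [← Multiset.cons_add, ← Multiset.cons_add]
    refine .tensorR (Multiset.forall_mem_cons.2 ⟨hK, hΥ⟩) hΔ hΔ' ?_ ?_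
    · simpa only [Multiset.cons_add] using ih₁ (hXΥ.mono fun _ hY => Multiset.subset_add_left hY)
    · simpa only [Multiset.cons_add] using ih₂ (hXΥ.mono fun _ hY => Multiset.subset_add_left hY)
  | limpL hΥ hΔ hΔ' _ _ ih₁ ih₂ =>
    have hXΥ := hX.mono fun Y hY => mem_of_mem_add_linBang hu hΔ hΔ' hY
    rw [← Multiset.cons_add, ← Multiset.cons_add]
    refine .limpL (Multiset.forall_mem_cons.2 ⟨hK, hΥ⟩) hΔ hΔ' ?_ ?_
    · simpa only [Multiset.cons_add] using ih₁ (hXΥ.mono fun _ hY => Multiset.subset_add_left hY)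
    · simpa only [Multiset.cons_add] using ih₂ (hXΥ.mono fun _ hY => Multiset.subset_add_left hY)
  | limpR _ ih => exact .limpR (ih hX)
  | withL1 _ ih => exact .withL1 (ih hX)
  | withL2 _ ih => exact .withL2 (ih hX)
  | withR _ _ ih₁ ih₂ => exact .withR (ih₁ hX) (ih₂ hX)
  | oplusL _ _ ih₁ ih₂ => exact .oplusL (ih₁ hX) (ih₂ hX)
  | oplusR1 _ ih => exact .oplusR1 (ih hX)
  | oplusR2 _ ih => exact .oplusR2 (ih hX)
  | oneL _ ih => exact .oneL (ih hX)
  | oneR hΥ => exact .oneR (Multiset.forall_mem_cons.2 ⟨hK, hΥ⟩)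
  | zeroL => exact .zeroL
  | topR => exact .topR
  | bangL hs _ ih =>
    have hXΓ := hX.mono fun Y hY => by
      rcases Multiset.mem_cons.1 hY with heq | hY
      · cases heq
        exact absurd ⟨u, hu, rfl⟩ hs
      · exact hY
    rw [Multiset.cons_swap]
    exact .bangL hs (ih hXΓ)
  | copy hs _ ih =>
    rw [Multiset.cons_swap]
    exact .copy hs (Multiset.cons_swap .. ▸ ih hX)
  | store _ ih =>
    exact .store (Multiset.cons_swap .. ▸ ih (hX.mono fun _ => Multiset.mem_cons_of_mem))
  | @bangR A Γ s G hdef h ih =>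
    refine .bangR (Multiset.forall_mem_cons.2 ⟨⟨_, X, rfl, .inl ⟨u, hu, rfl⟩⟩, hdef⟩) ?_
    unfold restrict
    by_cases hle : SLeA σ A s (SIdx.const u)
    · rw [Multiset.filter_cons_of_pos _ ⟨_, X, rfl, hle⟩]
      exact ih (hX.mono fun Y hY => Multiset.mem_filter.2 ⟨hY, _, Y, rfl, hle⟩)
    · rw [Multiset.filter_cons_of_neg _ fun ⟨_, _, heq, hle'⟩ => by cases heq; exact hle hle']
      exact h
  | capL hl _ ih => exact .capL hl (ih hX)
  | capR hfresh hΓ hΨ hF _ ih =>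
    exact .capR hfresh (Multiset.forall_mem_cons.2 ⟨hX.not_mem_fv_bang hΓ, hΓ⟩) hΨ hF (ih hX)
  | cupL hfresh hΓ hΨ hF hG _ ih =>
    exact .cupL hfresh (Multiset.forall_mem_cons.2 ⟨hX.not_mem_fv_bang hΓ, hΓ⟩) hΨ hF hG (ih hX)
  | cupR hl _ ih => exact .cupR hl (ih hX)

end Weakening

/-- **Left ⊗ macro rule**: if `A : Γ, !^a F, !^a G : · ⊢ H` is derivable, then
`A : Γ, !^a(!^a F ⊗ !^a G) : · ⊢ H` is derivable. -/
theorem sell_tensor_left_macro {I : Type} (σ : SSig I) (A : Set (SIdx I × SIdx I))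
    (Γ : Multiset (SForm I)) (a : SIdx I) (F G H : SForm I)
    (h : SSeq σ A (SForm.bang a F ::ₘ SForm.bang a G ::ₘ Γ) 0 H) :
    SSeq σ A
      (SForm.bang a (SForm.tensor (SForm.bang a F) (SForm.bang a G)) ::ₘ Γ) 0 H := by
  by_cases ha : σ.UnbI a
  · obtain ⟨u, hu, rfl⟩ := ha
    have hcov : FvCovered u (.tensor (.bang (.const u) F) (.bang (.const u) G))
        (.bang (.const u) F ::ₘ .bang (.const u) G ::ₘ Γ) := by
      simp only [FvCovered, SForm.fv, SIdx.fv, Set.empty_union, Set.mem_union]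
      rintro n (hn | hn)
      · exact ⟨F, Multiset.mem_cons_self .., hn⟩
      · exact ⟨G, Multiset.mem_cons_of_mem (Multiset.mem_cons_self ..), hn⟩
    refine .copy ⟨u, hu, rfl⟩ (.tensorL (.store (.store ?_)))
    convert h.weaken_bang_of_mem_U hu hcov using 1
    simp only [Multiset.cons_swap]
  · refine .bangL ha (.tensorL (.store (.store ?_)))
    rwa [Multiset.cons_swap]
end

section
/- The right ⊗ macro rule of the domain-aware type system is admissible in the dyadic sequent calculus for SELL^Π: suppose Υ contains only formulas !^u H with u ∈ U, Δ and Δ' contain only formulas !^c H with c ∉ U, and Υ^{⪰b}, Δ^{⪰b}, Δ'^{⪰b} are all defined; if A : Υ^{⪰b}, Δ^{⪰b} : · ⊢ !^b F and A : Υ^{⪰b}, Δ'^{⪰b} : · ⊢ !^b G are derivable, then A : Υ, Δ, Δ' : · ⊢ !^b(!^b F ⊗ !^b G) is derivable. -/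
attribute [local instance] Classical.propDecidable

variable {I : Type}

section Restrict

variable {σ : SSig I} {A : Set (SIdx I × SIdx I)} {a : SIdx I} {Γ Γ' : Multiset (SForm I)}

theorem restrict_add :
    restrict σ A a (Γ + Γ') = restrict σ A a Γ + restrict σ A a Γ' :=
  Multiset.filter_add _ _ _

theorem forall_mem_restrict {P : SForm I → Prop} (h : ∀ H ∈ Γ, P H) :
    ∀ H ∈ restrict σ A a Γ, P H :=
  fun H hH => h H (Multiset.mem_of_mem_filter hH)

theorem restrictDef.add (h : restrictDef σ A a Γ) (h' : restrictDef σ A a Γ') :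
    restrictDef σ A a (Γ + Γ') := by
  intro H hH
  rcases Multiset.mem_add.1 hH with hH | hH
  exacts [h H hH, h' H hH]

theorem restrictDef_of_unbBang (h : ∀ H ∈ Γ, unbBang σ H) : restrictDef σ A a Γ := by
  intro H hH
  obtain ⟨u, K, hu, rfl⟩ := h H hH
  exact ⟨_, K, rfl, Or.inl ⟨u, hu, rfl⟩⟩

end Restrict

theorem sell_tensor_right_macro_general {I : Type} (σ : SSig I) (A : Set (SIdx I × SIdx I))
    (Υ Δ Δ' : Multiset (SForm I)) (b : SIdx I) (F G : SForm I)
    (hΥ : ∀ H ∈ Υ, unbBang σ H) (hΔ : ∀ H ∈ Δ, linBang σ H)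
    (hΔ' : ∀ H ∈ Δ', linBang σ H)
    (dΔ : restrictDef σ A b Δ)
    (dΔ' : restrictDef σ A b Δ')
    (h1 : SSeq σ A (restrict σ A b Υ + restrict σ A b Δ) 0 (SForm.bang b F))
    (h2 : SSeq σ A (restrict σ A b Υ + restrict σ A b Δ') 0 (SForm.bang b G)) :
    SSeq σ A (Υ + Δ + Δ') 0
      (SForm.bang b (SForm.tensor (SForm.bang b F) (SForm.bang b G))) := by
  have hΥΔΔ' : restrictDef σ A b (Υ + Δ + Δ') :=
    (restrictDef_of_unbBang hΥ).add dΔ |>.add dΔ'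
  refine SSeq.bangR hΥΔΔ' ?_
  rw [restrict_add, restrict_add]
  exact SSeq.tensorR (forall_mem_restrict hΥ) (forall_mem_restrict hΔ)
    (forall_mem_restrict hΔ') h1 h2

/-- **Right ⊗ macro rule**: if `Υ` is unbounded, `Δ, Δ'` are linear,
`Υ^{⪰b}, Δ^{⪰b}, Δ'^{⪰b}` are all defined, and
`A : Υ^{⪰b}, Δ^{⪰b} : · ⊢ !^b F` and `A : Υ^{⪰b}, Δ'^{⪰b} : · ⊢ !^b G` are
derivable, then `A : Υ, Δ, Δ' : · ⊢ !^b(!^b F ⊗ !^b G)` is derivable. -/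
theorem sell_tensor_right_macro {I : Type} (σ : SSig I) (A : Set (SIdx I × SIdx I))
    (Υ Δ Δ' : Multiset (SForm I)) (b : SIdx I) (F G : SForm I)
    (hΥ : ∀ H ∈ Υ, unbBang σ H) (hΔ : ∀ H ∈ Δ, linBang σ H)
    (hΔ' : ∀ H ∈ Δ', linBang σ H)
    (dΥ : restrictDef σ A b Υ) (dΔ : restrictDef σ A b Δ)
    (dΔ' : restrictDef σ A b Δ')
    (h1 : SSeq σ A (restrict σ A b Υ + restrict σ A b Δ) 0 (SForm.bang b F))
    (h2 : SSeq σ A (restrict σ A b Υ + restrict σ A b Δ') 0 (SForm.bang b G)) :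
    SSeq σ A (Υ + Δ + Δ') 0
      (SForm.bang b (SForm.tensor (SForm.bang b F) (SForm.bang b G))) :=
  sell_tensor_right_macro_general σ A Υ Δ Δ' b F G hΥ hΔ hΔ' dΔ dΔ' h1 h2
end

section
/- Let sv, c ∈ I_l be two locations, let A = 1 ⊗ 1, and let W be the pre-process W = x_c(y).x_c⟨z⟩.(0 ‖ y_c(k).0). Then the judgment A : · ⊢ sv[W] :: x^c_sv : A ⊸ A (with empty channel context, where the located type on x is !^sv(!^c(!^c 1 ⊗ !^c 1) ⊸ !^sv(!^sv 1 ⊗ !^sv 1))) is derivable if and only if sv ⪯_l c. In particular, a server that stores a value received from the client for later use is typable only when the client's location is accessible from the server's location. -/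
/-!
If `sv ⪯ c`, the judgment is derived by `⊸R` followed by `⊗R`, which hands the received
channel `y^{sv}_c` to the continuation that uses it; `Δ'^{⪰ sv}` is defined because `sv ⪯ c`.

Conversely, classify the threads running at top level in a process by their shape; the
multiset of shapes is invariant under structural congruence and renaming. In a derivation of
the judgment a cut can therefore only split off an inert part, which offers `1` and uses only
`1`-typed or unbounded channels, so the thread `sv[W]` itself must be typed by `⊸R` and then
`⊗R`, whose side condition on the stored channel forces `sv ⪯ c`. Finally `sv ⪯ c` in the
generated preorder gives `sv ⪯_l c`: reading a location as the set of concrete locations above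
it turns `⪯` into reverse inclusion.
-/

attribute [local instance] Classical.propDecidable

/-- Locations over a base set `L` of concrete locations: `base a` is a location
`a ∈ I_l`, `unb x` is `x!` (the unbounded copy), `meet x y` is `x ⊓ y`, and
`var α` is a location variable. -/
inductive ELoc (L : Type) where
  | base : L → ELoc L
  | unb : ELoc L → ELoc L
  | meet : ELoc L → ELoc L → ELoc L
  | var : ℕ → ELoc L

namespace ELoc

def substV {L : Type} : ELoc L → ℕ → ELoc L → ELoc L
  | base a, _, _ => base a
  | unb x, n, l => unb (x.substV n l)
  | meet x y, n, l => meet (x.substV n l) (y.substV n l)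
  | var m, n, l => if m = n then l else var m

def vars {L : Type} : ELoc L → Set ℕ
  | base _ => ∅
  | unb x => x.vars
  | meet x y => x.vars ∪ y.vars
  | var n => {n}

/-- A location is unbounded if it is of the form `a!`. -/
def isUnb {L : Type} : ELoc L → Prop
  | unb _ => True
  | _ => False

end ELoc

/-- The preorder ⪯ on locations generated over the base preorder `le` on `I_l`
by: `a ⪯ b` iff `a ⪯_l b`; `a ⪯ a!`; `a! ⪯ b!` whenever `a ⪯ b`;
`a⊓b = b⊓a`; `a⊓b ⪯ a`; and `a = a⊓a`. -/
inductive LocLe {L : Type} (le : L → L → Prop) : ELoc L → ELoc L → Prop where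
  | base {a b : L} : le a b → LocLe le (.base a) (.base b)
  | to_unb (x : ELoc L) : LocLe le x (.unb x)
  | unb_mono {x y : ELoc L} : LocLe le x y → LocLe le (.unb x) (.unb y)
  | meet_le (x y : ELoc L) : LocLe le (.meet x y) x
  | meet_comm (x y : ELoc L) : LocLe le (.meet x y) (.meet y x)
  | meet_idem (x : ELoc L) : LocLe le x (.meet x x)
  | refl (x : ELoc L) : LocLe le x x
  | trans {x y z : ELoc L} : LocLe le x y → LocLe le y z → LocLe le x z

/-- The order on locations extended by the typing judgments in `𝒜`
(`(l, s) ∈ 𝒜` is read as `l : s`, i.e. `l ⪯ s`). -/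
def LeA {L : Type} (le : L → L → Prop) (𝒜 : Set (ELoc L × ELoc L)) :
    ELoc L → ELoc L → Prop :=
  Relation.ReflTransGen (fun x y => LocLe le x y ∨ (x, y) ∈ 𝒜)

/-- Types: SELL^Π formulas (every subformula of a well-formed type is implicitly
located; explicit migration is recorded by `bang`). -/
inductive Ty (L : Type) where
  | one : Ty L
  | atom : ℕ → Ty L
  | tensor : Ty L → Ty L → Ty L
  | limp : Ty L → Ty L → Ty L
  | oplus : Ty L → Ty L → Ty L
  | with_ : Ty L → Ty L → Ty L
  | bang : ELoc L → Ty L → Ty L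
  /-- ⋒ α:s. A (universal location quantifier, named binder) -/
  | cap : ℕ → ELoc L → Ty L → Ty L
  /-- ⋓ α:s. A (existential location quantifier, named binder) -/
  | cup : ℕ → ELoc L → Ty L → Ty L

namespace Ty

/-- Substitution of a location for a free location variable in a type. -/
def substV {L : Type} : Ty L → ℕ → ELoc L → Ty L
  | one, _, _ => one
  | atom n, _, _ => atom n
  | tensor A B, n, l => tensor (A.substV n l) (B.substV n l)
  | limp A B, n, l => limp (A.substV n l) (B.substV n l)
  | oplus A B, n, l => oplus (A.substV n l) (B.substV n l)
  | with_ A B, n, l => with_ (A.substV n l) (B.substV n l)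
  | bang s A, n, l => bang (s.substV n l) (A.substV n l)
  | cap v s A, n, l => cap v (s.substV n l) (if v = n then A else A.substV n l)
  | cup v s A, n, l => cup v (s.substV n l) (if v = n then A else A.substV n l)

/-- Free location variables of a type. -/
def vars {L : Type} : Ty L → Set ℕ
  | one => ∅
  | atom _ => ∅
  | tensor A B => A.vars ∪ B.vars
  | limp A B => A.vars ∪ B.vars
  | oplus A B => A.vars ∪ B.vars
  | with_ A B => A.vars ∪ B.vars
  | bang s A => s.vars ∪ A.vars
  | cap v s A => s.vars ∪ (A.vars \ {v})
  | cup v s A => s.vars ∪ (A.vars \ {v})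

end Ty

/-- Pre-processes of the domain-aware session π-calculus. -/
inductive Pre (L : Type) where
  | nil : Pre L
  | par : Pre L → Pre L → Pre L
  /-- `x_a⟨y⟩.p`: output of the bound name `y` on `x` towards location `a`. -/
  | out : ℕ → ELoc L → ℕ → Pre L → Pre L
  /-- `x_a(y).p`: input. -/
  | inp : ℕ → ELoc L → ℕ → Pre L → Pre L
  /-- `!x_a(y).p`: replicated input. -/
  | rinp : ℕ → ELoc L → ℕ → Pre L → Pre L
  | nu : ℕ → Pre L → Pre L
  | case : ℕ → ELoc L → Pre L → Pre L → Pre L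
  | inl : ℕ → ELoc L → Pre L → Pre L
  | inr : ℕ → ELoc L → Pre L → Pre L
  /-- `x_a⟨move y to b⟩.p` -/
  | moveOut : ℕ → ELoc L → ℕ → ELoc L → Pre L → Pre L
  /-- `x_a(move y to b).p` -/
  | moveIn : ℕ → ELoc L → ℕ → ELoc L → Pre L → Pre L
  /-- `x_a⟨b⟩.p`: location output. -/
  | locOut : ℕ → ELoc L → ELoc L → Pre L → Pre L
  /-- `x_a(α).p`: location input (binds the location variable `α`). -/
  | locIn : ℕ → ELoc L → ℕ → Pre L → Pre L
  /-- `[x ↔_{a,b} y]`: mediator / copycat. -/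
  | med : ℕ → ELoc L → ELoc L → ℕ → Pre L

/-- Processes: located pre-processes, composed in parallel under restrictions. -/
inductive Proc (L : Type) where
  | loc : ELoc L → Pre L → Proc L
  | nil : Proc L
  | par : Proc L → Proc L → Proc L
  | nu : ℕ → Proc L → Proc L

/-- Rename the name `n`: `rn n y w = if n = y then w else n`. -/
def rn (n y w : ℕ) : ℕ := if n = y then w else n

namespace Pre

/-- Name substitution `p{w/y}` (free occurrences of `y` become `w`). -/
def subn {L : Type} : Pre L → ℕ → ℕ → Pre L
  | nil, _, _ => nil
  | par p q, y, w => par (p.subn y w) (q.subn y w)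
  | out x a z p, y, w => out (rn x y w) a z (if z = y then p else p.subn y w)
  | inp x a z p, y, w => inp (rn x y w) a z (if z = y then p else p.subn y w)
  | rinp x a z p, y, w => rinp (rn x y w) a z (if z = y then p else p.subn y w)
  | nu z p, y, w => nu z (if z = y then p else p.subn y w)
  | case x a p q, y, w => case (rn x y w) a (p.subn y w) (q.subn y w)
  | inl x a p, y, w => inl (rn x y w) a (p.subn y w)
  | inr x a p, y, w => inr (rn x y w) a (p.subn y w)
  | moveOut x a z b p, y, w => moveOut (rn x y w) a z b (if z = y then p else p.subn y w)
  | moveIn x a z b p, y, w => moveIn (rn x y w) a z b (if z = y then p else p.subn y w)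
  | locOut x a b p, y, w => locOut (rn x y w) a b (p.subn y w)
  | locIn x a α p, y, w => locIn (rn x y w) a α (p.subn y w)
  | med x a b z, y, w => med (rn x y w) a b (rn z y w)

/-- Location substitution `p{c/α}` (free occurrences of location variable `α`
become `c`). -/
def subl {L : Type} : Pre L → ℕ → ELoc L → Pre L
  | nil, _, _ => nil
  | par p q, α, c => par (p.subl α c) (q.subl α c)
  | out x a z p, α, c => out x (a.substV α c) z (p.subl α c)
  | inp x a z p, α, c => inp x (a.substV α c) z (p.subl α c)
  | rinp x a z p, α, c => rinp x (a.substV α c) z (p.subl α c)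
  | nu z p, α, c => nu z (p.subl α c)
  | case x a p q, α, c => case x (a.substV α c) (p.subl α c) (q.subl α c)
  | inl x a p, α, c => inl x (a.substV α c) (p.subl α c)
  | inr x a p, α, c => inr x (a.substV α c) (p.subl α c)
  | moveOut x a z b p, α, c => moveOut x (a.substV α c) z (b.substV α c) (p.subl α c)
  | moveIn x a z b p, α, c => moveIn x (a.substV α c) z (b.substV α c) (p.subl α c)
  | locOut x a b p, α, c => locOut x (a.substV α c) (b.substV α c) (p.subl α c)
  | locIn x a β p, α, c => locIn x (a.substV α c) β (if β = α then p else p.subl α c)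
  | med x a b z, α, c => med x (a.substV α c) (b.substV α c) z

/-- Free (channel) names of a pre-process. -/
def fn {L : Type} : Pre L → Set ℕ
  | nil => ∅
  | par p q => p.fn ∪ q.fn
  | out x _ y p => insert x (p.fn \ {y})
  | inp x _ y p => insert x (p.fn \ {y})
  | rinp x _ y p => insert x (p.fn \ {y})
  | nu x p => p.fn \ {x}
  | case x _ p q => insert x (p.fn ∪ q.fn)
  | inl x _ p => insert x p.fn
  | inr x _ p => insert x p.fn
  | moveOut x _ y _ p => insert x (p.fn \ {y})
  | moveIn x _ y _ p => insert x (p.fn \ {y})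
  | locOut x _ _ p => insert x p.fn
  | locIn x _ _ p => insert x p.fn
  | med x _ _ y => {x, y}

/-- All channel names occurring in a pre-process (free or bound). -/
def names {L : Type} : Pre L → Set ℕ
  | nil => ∅
  | par p q => p.names ∪ q.names
  | out x _ y p => insert x (insert y p.names)
  | inp x _ y p => insert x (insert y p.names)
  | rinp x _ y p => insert x (insert y p.names)
  | nu x p => insert x p.names
  | case x _ p q => insert x (p.names ∪ q.names)
  | inl x _ p => insert x p.names
  | inr x _ p => insert x p.names
  | moveOut x _ y _ p => insert x (insert y p.names)
  | moveIn x _ y _ p => insert x (insert y p.names)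
  | locOut x _ _ p => insert x p.names
  | locIn x _ _ p => insert x p.names
  | med x _ _ y => {x, y}

/-- Free location variables of a pre-process. -/
def lvars {L : Type} : Pre L → Set ℕ
  | nil => ∅
  | par p q => p.lvars ∪ q.lvars
  | out _ a _ p => a.vars ∪ p.lvars
  | inp _ a _ p => a.vars ∪ p.lvars
  | rinp _ a _ p => a.vars ∪ p.lvars
  | nu _ p => p.lvars
  | case _ a p q => a.vars ∪ p.lvars ∪ q.lvars
  | inl _ a p => a.vars ∪ p.lvars
  | inr _ a p => a.vars ∪ p.lvars
  | moveOut _ a _ b p => a.vars ∪ b.vars ∪ p.lvars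
  | moveIn _ a _ b p => a.vars ∪ b.vars ∪ p.lvars
  | locOut _ a b p => a.vars ∪ b.vars ∪ p.lvars
  | locIn _ a α p => a.vars ∪ (p.lvars \ {α})
  | med _ a b _ => a.vars ∪ b.vars

end Pre

namespace Proc

def subn {L : Type} : Proc L → ℕ → ℕ → Proc L
  | loc a p, y, w => loc a (p.subn y w)
  | nil, _, _ => nil
  | par P Q, y, w => par (P.subn y w) (Q.subn y w)
  | nu x P, y, w => nu x (if x = y then P else P.subn y w)

def fn {L : Type} : Proc L → Set ℕ
  | loc _ p => p.fn
  | nil => ∅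
  | par P Q => P.fn ∪ Q.fn
  | nu x P => P.fn \ {x}

def names {L : Type} : Proc L → Set ℕ
  | loc _ p => p.names
  | nil => ∅
  | par P Q => P.names ∪ Q.names
  | nu x P => insert x P.names

end Proc

/-- Structural congruence on pre-processes (Fig. 3): least congruence containing
α-conversion, the commutative monoid laws for `‖` with unit `0`, the `ν`-laws
and scope extrusion. -/
inductive PreCong {L : Type} : Pre L → Pre L → Prop where
  | par_nil (p : Pre L) : PreCong (.par p .nil) p
  | par_comm (p q : Pre L) : PreCong (.par p q) (.par q p)
  | par_assoc (p q r : Pre L) : PreCong (.par p (.par q r)) (.par (.par p q) r)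
  | nu_nil (x : ℕ) : PreCong (.nu x .nil) (.nil : Pre L)
  | nu_swap (x y : ℕ) (p : Pre L) : PreCong (.nu x (.nu y p)) (.nu y (.nu x p))
  | scope (p q : Pre L) (y : ℕ) : y ∉ p.fn →
      PreCong (.par p (.nu y q)) (.nu y (.par p q))
  | alpha_nu (x y : ℕ) (p : Pre L) : y ∉ p.fn →
      PreCong (.nu x p) (.nu y (p.subn x y))
  | alpha_out (x : ℕ) (a : ELoc L) (z y : ℕ) (p : Pre L) : y ∉ p.fn →
      PreCong (.out x a z p) (.out x a y (p.subn z y))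
  | alpha_inp (x : ℕ) (a : ELoc L) (z y : ℕ) (p : Pre L) : y ∉ p.fn →
      PreCong (.inp x a z p) (.inp x a y (p.subn z y))
  | alpha_rinp (x : ℕ) (a : ELoc L) (z y : ℕ) (p : Pre L) : y ∉ p.fn →
      PreCong (.rinp x a z p) (.rinp x a y (p.subn z y))
  | alpha_moveOut (x : ℕ) (a : ELoc L) (z : ℕ) (b : ELoc L) (y : ℕ) (p : Pre L) :
      y ∉ p.fn → PreCong (.moveOut x a z b p) (.moveOut x a y b (p.subn z y))
  | alpha_moveIn (x : ℕ) (a : ELoc L) (z : ℕ) (b : ELoc L) (y : ℕ) (p : Pre L) :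
      y ∉ p.fn → PreCong (.moveIn x a z b p) (.moveIn x a y b (p.subn z y))
  | alpha_locIn (x : ℕ) (a : ELoc L) (α β : ℕ) (p : Pre L) : β ∉ p.lvars →
      PreCong (.locIn x a α p) (.locIn x a β (p.subl α (.var β)))
  | refl (p : Pre L) : PreCong p p
  | symm {p q : Pre L} : PreCong p q → PreCong q p
  | trans {p q r : Pre L} : PreCong p q → PreCong q r → PreCong p r
  | par_congr {p p' q q' : Pre L} : PreCong p p' → PreCong q q' →
      PreCong (.par p q) (.par p' q')
  | nu_congr (x : ℕ) {p q : Pre L} : PreCong p q → PreCong (.nu x p) (.nu x q)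
  | out_congr (x : ℕ) (a : ELoc L) (y : ℕ) {p q : Pre L} : PreCong p q →
      PreCong (.out x a y p) (.out x a y q)
  | inp_congr (x : ℕ) (a : ELoc L) (y : ℕ) {p q : Pre L} : PreCong p q →
      PreCong (.inp x a y p) (.inp x a y q)
  | rinp_congr (x : ℕ) (a : ELoc L) (y : ℕ) {p q : Pre L} : PreCong p q →
      PreCong (.rinp x a y p) (.rinp x a y q)
  | case_congr (x : ℕ) (a : ELoc L) {p p' q q' : Pre L} : PreCong p p' →
      PreCong q q' → PreCong (.case x a p q) (.case x a p' q')
  | inl_congr (x : ℕ) (a : ELoc L) {p q : Pre L} : PreCong p q →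
      PreCong (.inl x a p) (.inl x a q)
  | inr_congr (x : ℕ) (a : ELoc L) {p q : Pre L} : PreCong p q →
      PreCong (.inr x a p) (.inr x a q)
  | moveOut_congr (x : ℕ) (a : ELoc L) (y : ℕ) (b : ELoc L) {p q : Pre L} :
      PreCong p q → PreCong (.moveOut x a y b p) (.moveOut x a y b q)
  | moveIn_congr (x : ℕ) (a : ELoc L) (y : ℕ) (b : ELoc L) {p q : Pre L} :
      PreCong p q → PreCong (.moveIn x a y b p) (.moveIn x a y b q)
  | locOut_congr (x : ℕ) (a b : ELoc L) {p q : Pre L} : PreCong p q →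
      PreCong (.locOut x a b p) (.locOut x a b q)
  | locIn_congr (x : ℕ) (a : ELoc L) (α : ℕ) {p q : Pre L} : PreCong p q →
      PreCong (.locIn x a α p) (.locIn x a α q)

/-- Structural congruence on processes (Fig. 3). -/
inductive ProcCong {L : Type} : Proc L → Proc L → Prop where
  | loc_nil (a : ELoc L) : ProcCong (.loc a .nil) .nil
  | loc_par (a : ELoc L) (p q : Pre L) :
      ProcCong (.loc a (.par p q)) (.par (.loc a p) (.loc a q))
  | loc_nu (a : ELoc L) (y : ℕ) (p : Pre L) :
      ProcCong (.loc a (.nu y p)) (.nu y (.loc a p))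
  | par_nil (P : Proc L) : ProcCong (.par P .nil) P
  | par_comm (P Q : Proc L) : ProcCong (.par P Q) (.par Q P)
  | par_assoc (P Q R : Proc L) : ProcCong (.par P (.par Q R)) (.par (.par P Q) R)
  | nu_nil (x : ℕ) : ProcCong (.nu x .nil) (.nil : Proc L)
  | nu_swap (x y : ℕ) (P : Proc L) : ProcCong (.nu x (.nu y P)) (.nu y (.nu x P))
  | scope (P Q : Proc L) (x : ℕ) : x ∉ P.fn →
      ProcCong (.par P (.nu x Q)) (.nu x (.par P Q))
  | med_swap (x : ℕ) (a b : ELoc L) (y : ℕ) :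
      ProcCong (.loc a (.med x a b y)) (.loc b (.med y b a x))
  | alpha (x y : ℕ) (P : Proc L) : y ∉ P.fn →
      ProcCong (.nu x P) (.nu y (P.subn x y))
  | loc_congr (a : ELoc L) {p q : Pre L} : PreCong p q →
      ProcCong (.loc a p) (.loc a q)
  | par_congr {P P' Q Q' : Proc L} : ProcCong P P' → ProcCong Q Q' →
      ProcCong (.par P Q) (.par P' Q')
  | nu_congr (x : ℕ) {P Q : Proc L} : ProcCong P Q → ProcCong (.nu x P) (.nu x Q)
  | refl (P : Proc L) : ProcCong P P
  | symm {P Q : Proc L} : ProcCong P Q → ProcCong Q P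
  | trans {P Q R : Proc L} : ProcCong P Q → ProcCong Q R → ProcCong P R

/-- The reduction relation `→` on processes (Fig. 3). -/
inductive Red {L : Type} : Proc L → Proc L → Prop where
  | comm (a b : ELoc L) (x y z : ℕ) (p q : Pre L) :
      Red (.par (.loc a (.out x b y p)) (.loc b (.inp x a z q)))
          (.nu y (.par (.loc a p) (.loc b (q.subn z y))))
  | rcomm (a b : ELoc L) (x y z : ℕ) (p q : Pre L) :
      Red (.par (.loc a (.out x b y p)) (.loc b (.rinp x a z q)))
          (.par (.nu y (.par (.loc a p) (.loc b (q.subn z y))))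
                (.loc b (.rinp x a z q)))
  | locout (a b c : ELoc L) (x : ℕ) (α : ℕ) (p q : Pre L) :
      Red (.par (.loc a (.locOut x b c p)) (.loc b (.locIn x a α q)))
          (.par (.loc a p) (.loc b (q.subl α c)))
  | move (a b c : ELoc L) (x y y' : ℕ) (p q : Pre L) :
      Red (.par (.loc a (.moveOut x b y c p)) (.loc b (.moveIn x a y' c q)))
          (.nu y (.loc c (.par p (q.subn y' y))))
  | lcase (a b : ELoc L) (x : ℕ) (p q₁ q₂ : Pre L) :
      Red (.par (.loc a (.inl x b p)) (.loc b (.case x a q₁ q₂)))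
          (.par (.loc a p) (.loc b q₁))
  | rcase (a b : ELoc L) (x : ℕ) (p q₁ q₂ : Pre L) :
      Red (.par (.loc a (.inr x b p)) (.loc b (.case x a q₁ q₂)))
          (.par (.loc a p) (.loc b q₂))
  | idred (a b : ELoc L) (x y : ℕ) (P : Proc L) :
      Red (.nu x (.par (.loc a (.med x a b y)) P)) (P.subn x y)
  | res (y : ℕ) {P Q : Proc L} : Red P Q → Red (.nu y P) (.nu y Q)
  | parc (P : Proc L) {Q Q' : Proc L} : Red Q Q' → Red (.par P Q) (.par P Q')
  | congr {P P' Q Q' : Proc L} : ProcCong P P' → Red P' Q' → ProcCong Q' Q →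
      Red P Q

/-- A typed channel `x^d_c : A`: channel `x` offers service `A` at location `c`
(`site`), to be used from location `d` (`user`). -/
structure TChan (L : Type) where
  ch : ℕ
  user : ELoc L
  site : ELoc L
  ty : Ty L

namespace TChan

def vars {L : Type} (c : TChan L) : Set ℕ := c.user.vars ∪ c.site.vars ∪ c.ty.vars

/-- Rename the channel name `y` to `w`. -/
def subn {L : Type} (c : TChan L) (y w : ℕ) : TChan L :=
  ⟨rn c.ch y w, c.user, c.site, c.ty⟩

end TChan

/-- All channels of `Γ` are located at unbounded locations. -/
def unbCtx {L : Type} (Γ : Multiset (TChan L)) : Prop := ∀ c ∈ Γ, c.site.isUnb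

/-- All channels of `Γ` are located at linear locations. -/
def linCtx {L : Type} (Γ : Multiset (TChan L)) : Prop := ∀ c ∈ Γ, ¬ c.site.isUnb

/-- `Γ^{⪰ b}` is defined. -/
def rDef {L : Type} (le : L → L → Prop) (𝒜 : Set (ELoc L × ELoc L)) (b : ELoc L)
    (Γ : Multiset (TChan L)) : Prop :=
  ∀ c ∈ Γ, c.site.isUnb ∨ LeA le 𝒜 b c.site

/-- The restricted context `Γ^{⪰ b}`. -/
noncomputable def rGe {L : Type} (le : L → L → Prop) (𝒜 : Set (ELoc L × ELoc L))
    (b : ELoc L) (Γ : Multiset (TChan L)) : Multiset (TChan L) :=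
  Γ.filter (fun c => LeA le 𝒜 b c.site)

/-- `α` is a fresh location variable. -/
def varFresh {L : Type} (α : ℕ) (𝒜 : Set (ELoc L × ELoc L))
    (Γ : Multiset (TChan L)) (T : TChan L) : Prop :=
  (∀ pr ∈ 𝒜, α ∉ pr.1.vars ∧ α ∉ pr.2.vars) ∧ (∀ c ∈ Γ, α ∉ c.vars) ∧ α ∉ T.vars

/-- The domain-aware type system: `Typing le cutOK idAtom 𝒜 Γ P T` is the
judgment `𝒜 : Γ ⊢ P :: T`. If `cutOK = false` the rule `[Cut]` is forbidden;
if `idAtom = true` the mediator rule `[Id]` may only be applied to atomic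
propositions. -/
inductive Typing {L : Type} (le : L → L → Prop) (cutOK idAtom : Bool) :
    Set (ELoc L × ELoc L) → Multiset (TChan L) → Proc L → TChan L → Prop where
  | id {𝒜 Γ} {x y : ℕ} {a b : ELoc L} {A : Ty L} :
      (idAtom = true → ∃ n, A = Ty.atom n) →
      Typing le cutOK idAtom 𝒜 (⟨x, a, b, A⟩ ::ₘ Γ) (.loc a (.med x a b y)) ⟨y, b, a, A⟩
  | oneL {𝒜 Γ P T} {x : ℕ} {a b : ELoc L} :
      Typing le cutOK idAtom 𝒜 Γ P T →
      Typing le cutOK idAtom 𝒜 (⟨x, b, a, Ty.one⟩ ::ₘ Γ) P T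
  | oneR {𝒜 Υ} {x : ℕ} {a b : ELoc L} : unbCtx Υ →
      Typing le cutOK idAtom 𝒜 Υ (.loc b .nil) ⟨x, a, b, Ty.one⟩
  | tensorL {𝒜 Γ T} {x y : ℕ} {a b : ELoc L} {A B : Ty L} {p : Pre L} :
      Typing le cutOK idAtom 𝒜 (⟨x, b, a, B⟩ ::ₘ ⟨y, b, a, A⟩ ::ₘ Γ) (.loc b p) T →
      Typing le cutOK idAtom 𝒜 (⟨x, b, a, Ty.tensor A B⟩ ::ₘ Γ) (.loc b (.inp x a y p)) T
  | tensorR {𝒜 Υ Δ Δ'} {x y : ℕ} {a b : ELoc L} {A B : Ty L} {p q : Pre L} :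
      unbCtx Υ → linCtx Δ → linCtx Δ' →
      rDef le 𝒜 b Δ → rDef le 𝒜 b Δ' →
      Typing le cutOK idAtom 𝒜 (rGe le 𝒜 b Υ + rGe le 𝒜 b Δ) (.loc b p) ⟨y, a, b, A⟩ →
      Typing le cutOK idAtom 𝒜 (rGe le 𝒜 b Υ + rGe le 𝒜 b Δ') (.loc b q) ⟨x, a, b, B⟩ →
      Typing le cutOK idAtom 𝒜 (Υ + Δ + Δ')
        (.loc b (.out x a y (.par p q))) ⟨x, a, b, Ty.tensor A B⟩
  | limpL {𝒜 Υ Δ Δ' T} {x y : ℕ} {a b : ELoc L} {A B : Ty L} {p q : Pre L} :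
      unbCtx Υ → linCtx Δ → linCtx Δ' →
      Typing le cutOK idAtom 𝒜 (Υ + Δ) (.loc b p) ⟨y, a, b, A⟩ →
      Typing le cutOK idAtom 𝒜 (⟨x, b, a, B⟩ ::ₘ (Υ + Δ')) (.loc b q) T →
      Typing le cutOK idAtom 𝒜 (⟨x, b, a, Ty.limp A B⟩ ::ₘ (Υ + Δ + Δ'))
        (.loc b (.out x a y (.par p q))) T
  | limpR {𝒜 Γ} {x y : ℕ} {a b : ELoc L} {A B : Ty L} {p : Pre L} :
      rDef le 𝒜 b Γ →
      Typing le cutOK idAtom 𝒜 (⟨y, b, a, A⟩ ::ₘ rGe le 𝒜 b Γ) (.loc b p) ⟨x, a, b, B⟩ →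
      Typing le cutOK idAtom 𝒜 Γ (.loc b (.inp x a y p)) ⟨x, a, b, Ty.limp A B⟩
  | oplusL {𝒜 Γ T} {x : ℕ} {a b : ELoc L} {A B : Ty L} {p q : Pre L} :
      Typing le cutOK idAtom 𝒜 (⟨x, b, a, A⟩ ::ₘ Γ) (.loc b p) T →
      Typing le cutOK idAtom 𝒜 (⟨x, b, a, B⟩ ::ₘ Γ) (.loc b q) T →
      Typing le cutOK idAtom 𝒜 (⟨x, b, a, Ty.oplus A B⟩ ::ₘ Γ) (.loc b (.case x a p q)) T
  | oplusR1 {𝒜 Γ} {x : ℕ} {a b : ELoc L} {A B : Ty L} {p : Pre L} :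
      rDef le 𝒜 b Γ →
      Typing le cutOK idAtom 𝒜 (rGe le 𝒜 b Γ) (.loc b p) ⟨x, a, b, A⟩ →
      Typing le cutOK idAtom 𝒜 Γ (.loc b (.inl x a p)) ⟨x, a, b, Ty.oplus A B⟩
  | oplusR2 {𝒜 Γ} {x : ℕ} {a b : ELoc L} {A B : Ty L} {p : Pre L} :
      rDef le 𝒜 b Γ →
      Typing le cutOK idAtom 𝒜 (rGe le 𝒜 b Γ) (.loc b p) ⟨x, a, b, B⟩ →
      Typing le cutOK idAtom 𝒜 Γ (.loc b (.inr x a p)) ⟨x, a, b, Ty.oplus A B⟩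
  | withL1 {𝒜 Γ T} {x : ℕ} {a b : ELoc L} {A B : Ty L} {p : Pre L} :
      Typing le cutOK idAtom 𝒜 (⟨x, b, a, A⟩ ::ₘ Γ) (.loc b p) T →
      Typing le cutOK idAtom 𝒜 (⟨x, b, a, Ty.with_ A B⟩ ::ₘ Γ) (.loc b (.inl x a p)) T
  | withL2 {𝒜 Γ T} {x : ℕ} {a b : ELoc L} {A B : Ty L} {p : Pre L} :
      Typing le cutOK idAtom 𝒜 (⟨x, b, a, B⟩ ::ₘ Γ) (.loc b p) T →
      Typing le cutOK idAtom 𝒜 (⟨x, b, a, Ty.with_ A B⟩ ::ₘ Γ) (.loc b (.inr x a p)) T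
  | withR {𝒜 Γ} {x : ℕ} {a b : ELoc L} {A B : Ty L} {p q : Pre L} :
      rDef le 𝒜 b Γ →
      Typing le cutOK idAtom 𝒜 (rGe le 𝒜 b Γ) (.loc b p) ⟨x, a, b, A⟩ →
      Typing le cutOK idAtom 𝒜 (rGe le 𝒜 b Γ) (.loc b q) ⟨x, a, b, B⟩ →
      Typing le cutOK idAtom 𝒜 Γ (.loc b (.case x a p q)) ⟨x, a, b, Ty.with_ A B⟩
  | bangL {𝒜 Γ T} {x y : ℕ} {a b c : ELoc L} {A : Ty L} {p : Pre L} :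
      Typing le cutOK idAtom 𝒜 (⟨y, c, c, A⟩ ::ₘ Γ) (.loc c p) T →
      Typing le cutOK idAtom 𝒜 (⟨x, b, a, Ty.bang c A⟩ ::ₘ Γ)
        (.loc b (.moveIn x a y c p)) T
  | bangR {𝒜 Γ} {x y : ℕ} {a b c : ELoc L} {A : Ty L} {p : Pre L} :
      rDef le 𝒜 b Γ →
      Typing le cutOK idAtom 𝒜 (rGe le 𝒜 b Γ) (.loc c p) ⟨y, c, c, A⟩ →
      Typing le cutOK idAtom 𝒜 Γ (.loc b (.moveOut x a y c p)) ⟨x, a, b, Ty.bang c A⟩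
  | cupL {𝒜 Γ T} {x : ℕ} {a b : ELoc L} {v α : ℕ} {A : Ty L} {p : Pre L} :
      varFresh α 𝒜 Γ T →
      Typing le cutOK idAtom (insert (ELoc.var α, ELoc.meet a b) 𝒜)
        (⟨x, b, a, A.substV v (ELoc.var α)⟩ ::ₘ Γ) (.loc b p) T →
      Typing le cutOK idAtom 𝒜 (⟨x, b, a, Ty.cup v (ELoc.meet a b) A⟩ ::ₘ Γ)
        (.loc b (.locIn x a α p)) T
  | cupR {𝒜 Γ} {x : ℕ} {a b l : ELoc L} {v : ℕ} {A : Ty L} {p : Pre L} :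
      rDef le 𝒜 b Γ → LeA le 𝒜 l (ELoc.meet a b) →
      Typing le cutOK idAtom 𝒜 (rGe le 𝒜 b Γ) (.loc b p) ⟨x, a, b, A.substV v l⟩ →
      Typing le cutOK idAtom 𝒜 Γ (.loc b (.locOut x a l p))
        ⟨x, a, b, Ty.cup v (ELoc.meet a b) A⟩
  | capL {𝒜 Γ T} {x : ℕ} {a b l : ELoc L} {v : ℕ} {A : Ty L} {p : Pre L} :
      LeA le 𝒜 l (ELoc.meet a b) →
      Typing le cutOK idAtom 𝒜 (⟨x, b, a, A.substV v l⟩ ::ₘ Γ) (.loc b p) T →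
      Typing le cutOK idAtom 𝒜 (⟨x, b, a, Ty.cap v (ELoc.meet a b) A⟩ ::ₘ Γ)
        (.loc b (.locOut x a l p)) T
  | capR {𝒜 Γ} {x : ℕ} {a b : ELoc L} {v α : ℕ} {A : Ty L} {p : Pre L} :
      varFresh α 𝒜 Γ ⟨x, a, b, Ty.cap v (ELoc.meet a b) A⟩ → rDef le 𝒜 b Γ →
      Typing le cutOK idAtom (insert (ELoc.var α, ELoc.meet a b) 𝒜)
        (rGe le 𝒜 b Γ) (.loc b p) ⟨x, a, b, A.substV v (ELoc.var α)⟩ →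
      Typing le cutOK idAtom 𝒜 Γ (.loc b (.locIn x a α p))
        ⟨x, a, b, Ty.cap v (ELoc.meet a b) A⟩
  | copy {𝒜 Γ T} {x y : ℕ} {a b : ELoc L} {A : Ty L} {p : Pre L} :
      Typing le cutOK idAtom 𝒜
        (⟨x, b, ELoc.unb a, Ty.bang a A⟩ ::ₘ ⟨y, b, a, A⟩ ::ₘ Γ) (.loc b p) T →
      Typing le cutOK idAtom 𝒜 (⟨x, b, ELoc.unb a, Ty.bang a A⟩ ::ₘ Γ)
        (.loc b (.out x a y p)) T
  | bangPlusR {𝒜 Υ} {x y : ℕ} {a b : ELoc L} {A : Ty L} {p : Pre L} :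
      unbCtx Υ →
      Typing le cutOK idAtom 𝒜 (rGe le 𝒜 (ELoc.unb b) Υ) (.loc b p) ⟨y, a, b, A⟩ →
      Typing le cutOK idAtom 𝒜 Υ (.loc b (.rinp x a y p)) ⟨x, a, ELoc.unb b, Ty.bang b A⟩
  | cut {𝒜 Υ Δ Δ' T} {x : ℕ} {a b : ELoc L} {A : Ty L} {P Q : Proc L} :
      cutOK = true → unbCtx Υ → linCtx Δ → linCtx Δ' →
      Typing le cutOK idAtom 𝒜 (Υ + Δ) P ⟨x, b, a, A⟩ →
      Typing le cutOK idAtom 𝒜 (⟨x, b, a, A⟩ ::ₘ (Υ + Δ')) Q T →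
      Typing le cutOK idAtom 𝒜 (Υ + Δ + Δ') (.nu x (.par P Q)) T
  | congr {𝒜 Γ T} {P Q : Proc L} : ProcCong P Q →
      Typing le cutOK idAtom 𝒜 Γ P T →
      Typing le cutOK idAtom 𝒜 Γ Q T

namespace ELoc

variable {L : Type}

def above (le : L → L → Prop) : ELoc L → Set L
  | base a => {b | le a b}
  | unb x => x.above le
  | meet x y => x.above le ∪ y.above le
  | var _ => ∅

end ELoc

namespace LocLe

variable {L : Type} {le : L → L → Prop}

theorem above_subset (htrans : ∀ {a b c : L}, le a b → le b c → le a c) {x y : ELoc L}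
    (h : LocLe le x y) : y.above le ⊆ x.above le := by
  induction h with
  | base hab => exact fun t ht => htrans hab ht
  | to_unb | refl => exact subset_rfl
  | unb_mono _ ih => exact ih
  | meet_le => exact Set.subset_union_left
  | meet_comm => exact (Set.union_comm _ _).subset
  | meet_idem => exact (Set.union_self _).subset
  | trans _ _ ih₁ ih₂ => exact ih₂.trans ih₁

theorem le_of_base (hrefl : ∀ a, le a a) (htrans : ∀ {a b c : L}, le a b → le b c → le a c)
    {a b : L} (h : LocLe le (.base a) (.base b)) : le a b :=
  above_subset (le := le) htrans h (hrefl b)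

end LocLe

theorem LeA.locLe {L : Type} {le : L → L → Prop} {x y : ELoc L}
    (h : LeA le {pr | LocLe le pr.1 pr.2} x y) : LocLe le x y := by
  induction h with
  | refl => exact .refl x
  | tail _ hstep ih => exact ih.trans (hstep.elim id id)

inductive ThreadShape
  | output
  | inputThenOutput
  | other
  deriving DecidableEq

namespace Pre

variable {L : Type}

def shapes : Pre L → Multiset ThreadShape
  | nil => 0
  | par p q => p.shapes + q.shapes
  | nu _ p => p.shapes
  | out _ _ _ _ => {.output}
  | inp _ _ _ p => {if p.shapes = {.output} then .inputThenOutput else .other}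
  | rinp _ _ _ _ => {.other}
  | case _ _ _ _ => {.other}
  | inl _ _ _ => {.other}
  | inr _ _ _ => {.other}
  | moveOut _ _ _ _ _ => {.other}
  | moveIn _ _ _ _ _ => {.other}
  | locOut _ _ _ _ => {.other}
  | locIn _ _ _ _ => {.other}
  | med _ _ _ _ => {.other}

theorem shapes_subn (p : Pre L) (u v : ℕ) : (p.subn u v).shapes = p.shapes := by
  induction p with
  | par p q ihp ihq => simp [subn, shapes, ihp, ihq]
  | nu w p ih => by_cases h : w = u <;> simp [subn, shapes, h, ih]
  | inp _ _ w p ih => by_cases h : w = u <;> simp [subn, shapes, h, ih]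
  | _ => simp [subn, shapes]

end Pre

theorem PreCong.shapes_eq {L : Type} {p q : Pre L} (h : PreCong p q) : p.shapes = q.shapes := by
  induction h <;> simp_all [Pre.shapes, Pre.shapes_subn, add_comm, add_assoc]

namespace Proc

variable {L : Type}

def shapes : Proc L → Multiset ThreadShape
  | loc _ p => p.shapes
  | nil => 0
  | par P Q => P.shapes + Q.shapes
  | nu _ P => P.shapes

theorem shapes_subn (P : Proc L) (u v : ℕ) : (P.subn u v).shapes = P.shapes := by
  induction P with
  | loc _ p => exact p.shapes_subn u v
  | nil => rfl
  | par P Q ihP ihQ => simp [subn, shapes, ihP, ihQ]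
  | nu w P ih => by_cases h : w = u <;> simp [subn, shapes, h, ih]

end Proc

theorem ProcCong.shapes_eq {L : Type} {P Q : Proc L} (h : ProcCong P Q) :
    P.shapes = Q.shapes := by
  induction h with
  | loc_congr _ hpq => exact hpq.shapes_eq
  | _ => simp_all [Proc.shapes, Pre.shapes, Proc.shapes_subn, add_comm, add_assoc]

theorem Multiset.add_eq_singleton_iff {α : Type*} {s t : Multiset α} {a : α} :
    s + t = {a} ↔ s = {a} ∧ t = 0 ∨ s = 0 ∧ t = {a} := by
  constructor
  · intro h
    have hcard : card s + card t = 1 := by rw [← card_add, h, card_singleton]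
    rcases Nat.add_eq_one_iff.1 hcard with ⟨hs, -⟩ | ⟨-, ht⟩
    · rw [card_eq_zero] at hs; subst hs; simp_all
    · rw [card_eq_zero] at ht; subst ht; simp_all
  · rintro (⟨rfl, rfl⟩ | ⟨rfl, rfl⟩) <;> simp

namespace Typing

variable {L : Type} {le : L → L → Prop} {ck ia : Bool} {𝒜 : Set (ELoc L × ELoc L)}
  {Γ : Multiset (TChan L)} {P : Proc L} {T : TChan L}

theorem one_of_shapes_eq_zero (h : Typing le ck ia 𝒜 Γ P T) (hP : P.shapes = 0) :
    T.ty = .one ∧ ∀ d ∈ Γ, d.site.isUnb ∨ d.ty = .one := by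
  induction h with
  | oneL _ ih =>
      obtain ⟨hT, hΓ⟩ := ih hP
      refine ⟨hT, fun d hd => ?_⟩
      rcases Multiset.mem_cons.1 hd with rfl | hd
      exacts [.inr rfl, hΓ d hd]
  | oneR hΥ => exact ⟨rfl, fun d hd => .inl (hΥ d hd)⟩
  | cut _ _ _ _ _ _ ih₁ ih₂ =>
      simp only [Proc.shapes, add_eq_zero] at hP
      obtain ⟨-, hΓ₁⟩ := ih₁ hP.1
      obtain ⟨hT, hΓ₂⟩ := ih₂ hP.2
      refine ⟨hT, fun d hd => ?_⟩
      rcases Multiset.mem_add.1 hd with hd | hd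
      exacts [hΓ₁ d hd, hΓ₂ d (Multiset.mem_cons_of_mem (Multiset.mem_add.2 (.inr hd)))]
  | congr hPQ _ ih => exact ih (hPQ.shapes_eq.trans hP)
  | _ => simp [Proc.shapes, Pre.shapes] at hP

theorem leA_of_shapes_eq_output (h : Typing le ck ia 𝒜 Γ P T) (hP : P.shapes = {.output})
    (hT : ∃ A B, T.ty = .tensor A B) {ch : TChan L} (hch : ch ∈ Γ) (hlin : ¬ ch.site.isUnb)
    (hty : ∃ A B, ch.ty = .tensor A B) (hΓ : ∀ d ∈ Γ, d = ch ∨ d.ty = .one) :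
    LeA le 𝒜 T.site ch.site := by
  induction h with
  | tensorR hΥ _ _ hr hr' =>
      simp only [Multiset.mem_add] at hch
      rcases hch with (hch | hch) | hch
      exacts [absurd (hΥ ch hch) hlin, (hr ch hch).resolve_left hlin,
        (hr' ch hch).resolve_left hlin]
  | limpL | copy =>
      rcases hΓ _ (Multiset.mem_cons_self _ _) with rfl | hone <;> simp_all
  | oneL _ ih =>
      rcases Multiset.mem_cons.1 hch with rfl | hch
      · simp at hty
      · exact ih hP hT hch fun d hd => hΓ d (Multiset.mem_cons_of_mem hd)
  | @cut _ Υ Δ Δ' _ _ _ _ _ _ _ _ _ _ _ h₁ h₂ _ ih₂ =>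
      simp only [Proc.shapes, Multiset.add_eq_singleton_iff] at hP
      rcases hP with ⟨-, hQ⟩ | ⟨hP₁, hQ⟩
      · simp [(h₂.one_of_shapes_eq_zero hQ).1] at hT
      obtain ⟨hone, hΥΔ⟩ := h₁.one_of_shapes_eq_zero hP₁
      have hchΔ' : ch ∈ Δ' := by
        refine (Multiset.mem_add.1 hch).resolve_left fun hch => ?_
        obtain ⟨A, B, hAB⟩ := hty
        simpa [hlin, hAB] using hΥΔ ch hch
      refine ih₂ hQ hT (by simp [hchΔ']) fun d hd => ?_
      rcases Multiset.mem_cons.1 hd with rfl | hd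
      · exact .inr hone
      · exact hΓ d (by simp only [Multiset.mem_add] at hd ⊢; tauto)
  | congr hPQ _ ih => exact ih (hPQ.shapes_eq.trans hP) hT hch hΓ
  | _ => simp [Proc.shapes, Pre.shapes, ite_eq_iff] at hP

theorem leA_of_shapes_eq_inputThenOutput (h : Typing le ck ia 𝒜 Γ P T)
    (hP : P.shapes = {.inputThenOutput})
    (hT : ∃ A B C D, T.ty = .limp (.tensor A B) (.tensor C D)) (hlin : ¬ T.user.isUnb)
    (hΓ : ∀ d ∈ Γ, d.ty = .one) : LeA le 𝒜 T.site T.user := by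
  induction h with
  | limpR _ hp =>
      obtain ⟨A, B, C, D, hT⟩ := hT
      simp only [Ty.limp.injEq] at hT
      simp only [Proc.shapes, Pre.shapes, Multiset.singleton_inj, ite_eq_left_iff,
        reduceCtorEq, imp_false, not_not] at hP
      refine hp.leA_of_shapes_eq_output hP ⟨C, D, hT.2⟩ (Multiset.mem_cons_self _ _) hlin
        ⟨A, B, hT.1⟩ fun d hd => ?_
      rcases Multiset.mem_cons.1 hd with rfl | hd
      · exact .inl rfl
      · exact .inr (hΓ d (Multiset.mem_of_mem_filter hd))
  | tensorL => simpa using hΓ _ (Multiset.mem_cons_self _ _)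
  | oneL _ ih => exact ih hP hT hlin fun d hd => hΓ d (Multiset.mem_cons_of_mem hd)
  | cut _ _ _ _ h₁ h₂ _ ih₂ =>
      simp only [Proc.shapes, Multiset.add_eq_singleton_iff] at hP
      rcases hP with ⟨-, hQ⟩ | ⟨hP₁, hQ⟩
      · simp [(h₂.one_of_shapes_eq_zero hQ).1] at hT
      refine ih₂ hQ hT hlin fun d hd => ?_
      rcases Multiset.mem_cons.1 hd with rfl | hd
      · exact (h₁.one_of_shapes_eq_zero hP₁).1
      · exact hΓ d (by simp only [Multiset.mem_add] at hd ⊢; tauto)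
  | congr hPQ _ ih => exact ih (hPQ.shapes_eq.trans hP) hT hlin hΓ
  | _ => simp [Proc.shapes, Pre.shapes] at hP

theorem storing_of_leA {a b : ELoc L} (x y z k : ℕ) (ha : ¬ a.isUnb) (hba : LeA le 𝒜 b a) :
    Typing le ck ia 𝒜 0 (.loc b (.inp x a y (.out x a z (.par .nil (.inp y a k .nil)))))
      ⟨x, a, b, .limp (.tensor .one .one) (.tensor .one .one)⟩ := by
  set stored : TChan L := ⟨y, b, a, .tensor .one .one⟩
  have hnil : rGe le 𝒜 b 0 = 0 := Multiset.filter_zero _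
  have hstored : rGe le 𝒜 b {stored} = {stored} := by
    rw [rGe, Multiset.filter_singleton, if_pos hba]
  have hempty : unbCtx (L := L) 0 := fun _ h => absurd h (Multiset.notMem_zero _)
  have hreply : Typing le ck ia 𝒜 {stored} (.loc b (.inp y a k .nil)) ⟨x, a, b, .one⟩ :=
    .tensorL (.oneL (.oneL (.oneR hempty)))
  refine .limpR (by simp [rDef]) ?_
  rw [hnil, show stored ::ₘ 0 = 0 + 0 + {stored} by simp]
  refine .tensorR hempty (by simp [linCtx]) (by simpa [linCtx] using ha) (by simp [rDef])
    (by simpa [rDef] using .inr hba) ?_ ?_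
  · rw [hnil, add_zero]
    exact .oneR hempty
  · rwa [hnil, hstored, zero_add]

end Typing

theorem storing_values_general {L : Type} (le : L → L → Prop)
    (hrefl : ∀ a, le a a) (htrans : ∀ {a b c : L}, le a b → le b c → le a c)
    (sv c : L) (x y z k : ℕ) :
    (Typing le true false {pr | LocLe le pr.1 pr.2} (0 : Multiset (TChan L))
      (.loc (.base sv)
        (.inp x (.base c) y
          (.out x (.base c) z
            (.par .nil (.inp y (.base c) k .nil)))))
      ⟨x, .base c, .base sv,
        Ty.limp (Ty.tensor Ty.one Ty.one) (Ty.tensor Ty.one Ty.one)⟩)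
    ↔ le sv c := by
  refine ⟨fun h => ?_, fun hle => .storing_of_leA x y z k id (.single (.inl (.base hle)))⟩
  have hle := h.leA_of_shapes_eq_inputThenOutput (by simp [Proc.shapes, Pre.shapes])
    ⟨_, _, _, _, rfl⟩ id (by simp)
  exact LocLe.le_of_base hrefl htrans hle.locLe

/-- **Storing values** (Example 5): with `A = 1 ⊗ 1` and
`W = x_c(y).x_c⟨z⟩.(0 ‖ y_c(k).0)`, the judgment
`𝒜 : · ⊢ sv[W] :: x^c_sv : A ⊸ A` is derivable iff `sv ⪯_l c`:
a server may store a value received from the client for later use only when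
the client's location is accessible from the server's location. -/
theorem storing_values {L : Type} (le : L → L → Prop)
    (hrefl : ∀ a, le a a) (htrans : ∀ {a b c : L}, le a b → le b c → le a c)
    (sv c : L) (x y z k : ℕ)
    (hxy : x ≠ y) (hxz : x ≠ z) (hxk : x ≠ k)
    (hyz : y ≠ z) (hyk : y ≠ k) (hzk : z ≠ k) :
    (Typing le true false {pr | LocLe le pr.1 pr.2} (0 : Multiset (TChan L))
      (.loc (.base sv)
        (.inp x (.base c) y
          (.out x (.base c) z
            (.par .nil (.inp y (.base c) k .nil)))))
      ⟨x, .base c, .base sv,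
        Ty.limp (Ty.tensor Ty.one Ty.one) (Ty.tensor Ty.one Ty.one)⟩)
    ↔ le sv c :=
  storing_values_general le hrefl htrans sv c x y z k
end
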